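/- For every real λ with Δ(λ)² ≤ 1: 4(1 − Δ(λ)²)(1 + A(λ))² + J(λ)² ≥ 4(1 − Δ(λ)²). (This is the bound |ŵ|² ≥ |2Ω|² on the absolutely continuous spectrum, where ŵ = 2iΩ(1+A) − J and Ω² = 1 − Δ².) -/

import Mathlib

/-!
For real `λ` all four fundamental solutions are real. Constancy of the Wronskian gives
`θ_q φ_{q+1} - θ_{q+1} φ_q = 1` and, comparing with the unperturbed Wronskian to the right of the
support of the perturbation, `(a_0/a⁰_0)(θ⁺_0 φ⁺_1 - θ⁺_1 φ⁺_0) = 1`. Modulo these two relations,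
`φ_q² (4(1-Δ²)(1+A)² + J² - 4(1-Δ²))` is an explicit sum `X² + (1-Δ²) Y²`, which is nonnegative on
the spectrum. If `φ_q = 0`, the first relation reads `Δ² - ϕ² = 1`, so `Δ² = 1` there and the bound
is trivial.
-/

/-- `y` solves the Jacobi equation `a_{n-1} y_{n-1} + a_n y_{n+1} + b_n y_n = λ y_n` on `ℤ`. -/
def JacobiSol (a b : ℤ → ℂ) (lam : ℂ) (y : ℤ → ℂ) : Prop :=
  ∀ n : ℤ, a (n - 1) * y (n - 1) + a n * y (n + 1) + b n * y n = lam * y n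

/-- The Wronskian `{f,g}_n = a_n (f_n g_{n+1} - f_{n+1} g_n)`. -/
def Wron (a : ℤ → ℂ) (f g : ℤ → ℂ) (n : ℤ) : ℂ :=
  a n * (f n * g (n + 1) - f (n + 1) * g n)

open ComplexOrder
open ComplexConjugate

namespace JacobiSol

variable {a b : ℤ → ℂ} {lam : ℂ} {f g : ℤ → ℂ}

theorem eq_of_agree (ha : ∀ n, a n ≠ 0) (hf : JacobiSol a b lam f)
    (hg : JacobiSol a b lam g) {n₀ : ℤ} (h₀ : f n₀ = g n₀) (h₁ : f (n₀ + 1) = g (n₀ + 1)) :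
    f = g := by
  suffices h : ∀ n, f n = g n ∧ f (n + 1) = g (n + 1) from funext fun n => (h n).1
  intro n
  induction n using Int.inductionOn' with
  | b => exact n₀
  | zero => exact ⟨h₀, h₁⟩
  | succ k _ ih =>
    refine ⟨ih.2, mul_left_cancel₀ (ha (k + 1)) ?_⟩
    have hf' := hf (k + 1)
    have hg' := hg (k + 1)
    simp only [add_sub_cancel_right] at hf' hg'
    linear_combination hf' - hg' - a k * ih.1 + (lam - b (k + 1)) * ih.2
  | pred k _ ih =>
    refine ⟨mul_left_cancel₀ (ha (k - 1)) ?_, by rw [sub_add_cancel]; exact ih.1⟩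
    linear_combination hf k - hg k - a k * ih.2 + (lam - b k) * ih.1

theorem wron_add_one (hf : JacobiSol a b lam f) (hg : JacobiSol a b lam g) (n : ℤ) :
    Wron a f g (n + 1) = Wron a f g n := by
  have hf' := hf (n + 1)
  have hg' := hg (n + 1)
  simp only [add_sub_cancel_right] at hf' hg'
  simp only [Wron]
  linear_combination f (n + 1) * hg' - g (n + 1) * hf'

theorem wron_eq (hf : JacobiSol a b lam f) (hg : JacobiSol a b lam g) (m n : ℤ) :
    Wron a f g n = Wron a f g m := by
  induction n using Int.inductionOn' with
  | b => exact m
  | zero => rfl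
  | succ k _ ih => rw [wron_add_one hf hg, ih]
  | pred k _ ih => rw [← wron_add_one hf hg, sub_add_cancel, ih]

theorem wron_eq_of_initial (hf : JacobiSol a b lam f) (hg : JacobiSol a b lam g)
    (hf₀ : f 0 = 1) (hf₁ : f 1 = 0) (hg₀ : g 0 = 0) (hg₁ : g 1 = 1) (n : ℤ) :
    Wron a f g n = a 0 := by
  rw [wron_eq hf hg 0, Wron, zero_add, hf₀, hf₁, hg₀, hg₁]
  ring

theorem monodromy_det (hf : JacobiSol a b lam f) (hg : JacobiSol a b lam g)
    (hf₀ : f 0 = 1) (hf₁ : f 1 = 0) (hg₀ : g 0 = 0) (hg₁ : g 1 = 1) {q : ℤ} (ha₀ : a 0 ≠ 0)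
    (haq : a q = a 0) : f q * g (q + 1) - f (q + 1) * g q = 1 := by
  have h := wron_eq_of_initial hf hg hf₀ hf₁ hg₀ hg₁ q
  rw [Wron, haq] at h
  exact mul_left_cancel₀ ha₀ (h.trans (mul_one _).symm)

theorem wron_eq_wron_of_agree {a' b' F G : ℤ → ℂ} (hF : JacobiSol a' b' lam F)
    (hG : JacobiSol a' b' lam G) (hf : JacobiSol a b lam f) (hg : JacobiSol a b lam g) {m : ℤ}
    (ham : a' m = a m) (hFm : F m = f m) (hFm₁ : F (m + 1) = f (m + 1)) (hGm : G m = g m)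
    (hGm₁ : G (m + 1) = g (m + 1)) (n : ℤ) : Wron a' F G n = Wron a f g n :=
  calc Wron a' F G n = Wron a' F G m := wron_eq hF hG m n
    _ = Wron a f g m := by rw [Wron, Wron, ham, hFm, hFm₁, hGm, hGm₁]
    _ = Wron a f g n := wron_eq hf hg n m

theorem exists_real {a b : ℤ → ℝ} {lam : ℝ} (ha : ∀ n, a n ≠ 0)
    (hf : JacobiSol (fun n => (a n : ℂ)) (fun n => (b n : ℂ)) lam f) {n₀ : ℤ}
    (h₀ : conj (f n₀) = f n₀) (h₁ : conj (f (n₀ + 1)) = f (n₀ + 1)) :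
    ∃ F : ℤ → ℝ, f = fun n => (F n : ℂ) := by
  have hconj : JacobiSol (fun n => (a n : ℂ)) (fun n => (b n : ℂ)) lam (fun n => conj (f n)) :=
    fun n => by simpa using congrArg conj (hf n)
  have hreal := eq_of_agree (fun n => Complex.ofReal_ne_zero.mpr (ha n)) hconj hf h₀ h₁
  exact ⟨fun n => (f n).re, funext fun n => (Complex.conj_eq_iff_re.mp (congrFun hreal n)).symm⟩

end JacobiSol

section WHat

variable (Δ ϕ θ₁ φ₀ Θ₀ Θ₁ Φ₀ Φ₁ r t : ℝ)

theorem w_hat_sos (hdet : Δ ^ 2 - ϕ ^ 2 - θ₁ * φ₀ = 1) (hW : r * (Θ₀ * Φ₁ - Θ₁ * Φ₀) = 1) :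
    φ₀ ^ 2 * ((1 - Δ ^ 2) * (r * Φ₁ + t * Φ₀ + Θ₀) ^ 2
        + (r * φ₀ * Θ₁ + ϕ * (r * Φ₁ - Θ₀) + t * (φ₀ * Θ₀ + ϕ * Φ₀) + θ₁ * Φ₀) ^ 2
        - 4 * (1 - Δ ^ 2))
      = (φ₀ ^ 2 * (r * Θ₁ + t * Θ₀) - φ₀ * θ₁ * Φ₀
          + ϕ * (φ₀ * (r * Φ₁ + t * Φ₀ - Θ₀) - 2 * ϕ * Φ₀)) ^ 2
        + (1 - Δ ^ 2) * (φ₀ * (r * Φ₁ + t * Φ₀ - Θ₀) - 2 * ϕ * Φ₀) ^ 2 := by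
  linear_combination
    (4 * ϕ ^ 2 * Φ₀ ^ 2 - 4 * ϕ * φ₀ * Φ₀ * (r * Φ₁ + t * Φ₀ - Θ₀)
      - 4 * φ₀ ^ 2 * Φ₀ * (r * Θ₁ + t * Θ₀)) * hdet
    + 4 * φ₀ ^ 2 * (1 - Δ ^ 2) * hW

theorem w_hat_lower_bound (hdet : Δ ^ 2 - ϕ ^ 2 - θ₁ * φ₀ = 1)
    (hW : r * (Θ₀ * Φ₁ - Θ₁ * Φ₀) = 1) (hΔ : Δ ^ 2 ≤ 1) :
    4 * (1 - Δ ^ 2) ≤ (1 - Δ ^ 2) * (r * Φ₁ + t * Φ₀ + Θ₀) ^ 2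
        + (r * φ₀ * Θ₁ + ϕ * (r * Φ₁ - Θ₀) + t * (φ₀ * Θ₀ + ϕ * Φ₀) + θ₁ * Φ₀) ^ 2 := by
  rcases eq_or_ne φ₀ 0 with hφ₀ | hφ₀
  · have hΔ₁ : Δ ^ 2 = 1 := by subst hφ₀; nlinarith [sq_nonneg ϕ]
    rw [hΔ₁, sub_self, mul_zero, zero_mul, zero_add]
    exact sq_nonneg _
  · have hscaled : 0 ≤ φ₀ ^ 2 * ((1 - Δ ^ 2) * (r * Φ₁ + t * Φ₀ + Θ₀) ^ 2
        + (r * φ₀ * Θ₁ + ϕ * (r * Φ₁ - Θ₀) + t * (φ₀ * Θ₀ + ϕ * Φ₀) + θ₁ * Φ₀) ^ 2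
        - 4 * (1 - Δ ^ 2)) := by
      rw [w_hat_sos Δ ϕ θ₁ φ₀ Θ₀ Θ₁ Φ₀ Φ₁ r t hdet hW]
      exact add_nonneg (sq_nonneg _) (mul_nonneg (sub_nonneg.mpr hΔ) (sq_nonneg _))
    exact sub_nonneg.mp ((mul_nonneg_iff_of_pos_left (by positivity)).mp hscaled)

end WHat

theorem w_hat_lower_bound_on_spectrum_general
    (q : ℕ) (a0 b0 : ℤ → ℝ)
    (hpa : ∀ n : ℤ, a0 (n + (q : ℤ)) = a0 n)
    (ha0 : ∀ n : ℤ, 0 < a0 n)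
    (θ φ : ℂ → ℤ → ℂ)
    (hθ : ∀ lam : ℂ, JacobiSol (fun n => (a0 n : ℂ)) (fun n => (b0 n : ℂ)) lam (θ lam))
    (hθ0 : ∀ lam : ℂ, θ lam 0 = 1) (hθ1 : ∀ lam : ℂ, θ lam 1 = 0)
    (hφ : ∀ lam : ℂ, JacobiSol (fun n => (a0 n : ℂ)) (fun n => (b0 n : ℂ)) lam (φ lam))
    (hφ0 : ∀ lam : ℂ, φ lam 0 = 0) (hφ1 : ∀ lam : ℂ, φ lam 1 = 1)
    (p : ℕ) (u v : ℤ → ℝ)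
    (hsupp : ∀ n : ℤ, (n < 0 ∨ (p : ℤ) < n) → u n = 0 ∧ v n = 0)
    (hapos : ∀ n : ℤ, 0 < a0 n + u n)
    (Θp Φp : ℂ → ℤ → ℂ)
    (hΘp : ∀ lam : ℂ, JacobiSol (fun n => ((a0 n + u n : ℝ) : ℂ))
      (fun n => ((b0 n + v n : ℝ) : ℂ)) lam (Θp lam))
    (hΘpb : ∀ lam : ℂ, ∀ n : ℤ, (p : ℤ) + 1 ≤ n → Θp lam n = θ lam n)
    (hΦp : ∀ lam : ℂ, JacobiSol (fun n => ((a0 n + u n : ℝ) : ℂ))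
      (fun n => ((b0 n + v n : ℝ) : ℂ)) lam (Φp lam))
    (hΦpb : ∀ lam : ℂ, ∀ n : ℤ, (p : ℤ) + 1 ≤ n → Φp lam n = φ lam n)
    :
    ∀ lam : ℝ,
      (let Δv : ℂ := (φ (lam : ℂ) ((q : ℤ) + 1) + θ (lam : ℂ) (q : ℤ)) / 2
       let ϕv : ℂ := (φ (lam : ℂ) ((q : ℤ) + 1) - θ (lam : ℂ) (q : ℤ)) / 2
       let r : ℂ := ((a0 0 + u 0 : ℝ) : ℂ) / ((a0 0 : ℝ) : ℂ)
       let t : ℂ := ((v 0 : ℝ) : ℂ) / ((a0 0 : ℝ) : ℂ)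
       let Av : ℂ := (1 / 2) * (r * Φp (lam : ℂ) 1 + t * Φp (lam : ℂ) 0 + Θp (lam : ℂ) 0) - 1
       let Jv : ℂ := -(r * φ (lam : ℂ) (q : ℤ) * Θp (lam : ℂ) 1
            + ϕv * (r * Φp (lam : ℂ) 1 - Θp (lam : ℂ) 0)
            + t * (φ (lam : ℂ) (q : ℤ) * Θp (lam : ℂ) 0 + ϕv * Φp (lam : ℂ) 0)
            + θ (lam : ℂ) ((q : ℤ) + 1) * Φp (lam : ℂ) 0)
       Δv ^ 2 ≤ 1 →
       4 * (1 - Δv ^ 2) ≤ 4 * (1 - Δv ^ 2) * (1 + Av) ^ 2 + Jv ^ 2) := by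
  intro lam
  have hdet : θ lam q * φ lam (q + 1) - θ lam (q + 1) * φ lam q = 1 :=
    (hθ lam).monodromy_det (hφ lam) (hθ0 lam) (hθ1 lam) (hφ0 lam) (hφ1 lam)
      (Complex.ofReal_ne_zero.mpr (ha0 0).ne') (by simpa using hpa 0)
  have hW := (hΘp lam).wron_eq_wron_of_agree (hΦp lam) (hθ lam) (hφ lam) (m := p + 1)
    (by simp [(hsupp _ (Or.inr (lt_add_one _))).1]) (hΘpb lam _ le_rfl)
    (hΘpb lam _ (by omega)) (hΦpb lam _ le_rfl) (hΦpb lam _ (by omega)) 0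
  rw [(hθ lam).wron_eq_of_initial (hφ lam) (hθ0 lam) (hθ1 lam) (hφ0 lam) (hφ1 lam), Wron,
    zero_add] at hW
  obtain ⟨θr, hθr⟩ := (hθ lam).exists_real (fun n => (ha0 n).ne') (n₀ := 0)
    (by simp [hθ0]) (by simp [hθ1])
  obtain ⟨φr, hφr⟩ := (hφ lam).exists_real (fun n => (ha0 n).ne') (n₀ := 0)
    (by simp [hφ0]) (by simp [hφ1])
  obtain ⟨Θr, hΘr⟩ := (hΘp lam).exists_real (fun n => (hapos n).ne') (n₀ := p + 1)
    (by simp [hΘpb lam _ le_rfl, hθr]) (by simp [hΘpb lam (p + 1 + 1) (by omega), hθr])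
  obtain ⟨Φr, hΦr⟩ := (hΦp lam).exists_real (fun n => (hapos n).ne') (n₀ := p + 1)
    (by simp [hΦpb lam _ le_rfl, hφr]) (by simp [hΦpb lam (p + 1 + 1) (by omega), hφr])
  simp only [hθr, hφr, hΘr, hΦr] at hdet hW ⊢
  intro hΔ
  have hdetR : θr q * φr (q + 1) - θr (q + 1) * φr q = 1 := by exact_mod_cast hdet
  have key := w_hat_lower_bound ((φr (q + 1) + θr q) / 2) ((φr (q + 1) - θr q) / 2) (θr (q + 1))
    (φr q) (Θr 0) (Θr 1) (Φr 0) (Φr 1) ((a0 0 + u 0) / a0 0) (v 0 / a0 0)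
    (by linear_combination hdetR) (by field_simp [(ha0 0).ne']; exact_mod_cast hW)
    (by exact_mod_cast hΔ)
  convert Complex.real_le_real.mpr key using 1 <;> push_cast <;> ring

/-- On the a.c. spectrum (`λ` real, `Δ(λ)² ≤ 1`) one has
`4(1−Δ²)(1+A)² + J² ≥ 4(1−Δ²)`, i.e. `|ŵ|² ≥ |2Ω|²` (inequality in the partial order of `ℂ`;
all quantities are real for real `λ`). -/
theorem w_hat_lower_bound_on_spectrum
    (q : ℕ) (hq : 2 ≤ q) (a0 b0 : ℤ → ℝ)
    (hpa : ∀ n : ℤ, a0 (n + (q : ℤ)) = a0 n) (hpb : ∀ n : ℤ, b0 (n + (q : ℤ)) = b0 n)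
    (ha0 : ∀ n : ℤ, 0 < a0 n) (hprod : ∏ j ∈ Finset.Icc (1 : ℤ) (q : ℤ), a0 j = 1)
    (θ φ : ℂ → ℤ → ℂ)
    (hθ : ∀ lam : ℂ, JacobiSol (fun n => (a0 n : ℂ)) (fun n => (b0 n : ℂ)) lam (θ lam))
    (hθ0 : ∀ lam : ℂ, θ lam 0 = 1) (hθ1 : ∀ lam : ℂ, θ lam 1 = 0)
    (hφ : ∀ lam : ℂ, JacobiSol (fun n => (a0 n : ℂ)) (fun n => (b0 n : ℂ)) lam (φ lam))
    (hφ0 : ∀ lam : ℂ, φ lam 0 = 0) (hφ1 : ∀ lam : ℂ, φ lam 1 = 1)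
    (p : ℕ) (hp : 1 ≤ p) (u v : ℤ → ℝ)
    (hsupp : ∀ n : ℤ, (n < 0 ∨ (p : ℤ) < n) → u n = 0 ∧ v n = 0)
    (hapos : ∀ n : ℤ, 0 < a0 n + u n)
    (Θp Φp : ℂ → ℤ → ℂ)
    (hΘp : ∀ lam : ℂ, JacobiSol (fun n => ((a0 n + u n : ℝ) : ℂ))
      (fun n => ((b0 n + v n : ℝ) : ℂ)) lam (Θp lam))
    (hΘpb : ∀ lam : ℂ, ∀ n : ℤ, (p : ℤ) + 1 ≤ n → Θp lam n = θ lam n)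
    (hΦp : ∀ lam : ℂ, JacobiSol (fun n => ((a0 n + u n : ℝ) : ℂ))
      (fun n => ((b0 n + v n : ℝ) : ℂ)) lam (Φp lam))
    (hΦpb : ∀ lam : ℂ, ∀ n : ℤ, (p : ℤ) + 1 ≤ n → Φp lam n = φ lam n)
    :
    ∀ lam : ℝ,
      (let Δv : ℂ := (φ (lam : ℂ) ((q : ℤ) + 1) + θ (lam : ℂ) (q : ℤ)) / 2
       let ϕv : ℂ := (φ (lam : ℂ) ((q : ℤ) + 1) - θ (lam : ℂ) (q : ℤ)) / 2
       let r : ℂ := ((a0 0 + u 0 : ℝ) : ℂ) / ((a0 0 : ℝ) : ℂ)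
       let t : ℂ := ((v 0 : ℝ) : ℂ) / ((a0 0 : ℝ) : ℂ)
       let Av : ℂ := (1 / 2) * (r * Φp (lam : ℂ) 1 + t * Φp (lam : ℂ) 0 + Θp (lam : ℂ) 0) - 1
       let Jv : ℂ := -(r * φ (lam : ℂ) (q : ℤ) * Θp (lam : ℂ) 1
            + ϕv * (r * Φp (lam : ℂ) 1 - Θp (lam : ℂ) 0)
            + t * (φ (lam : ℂ) (q : ℤ) * Θp (lam : ℂ) 0 + ϕv * Φp (lam : ℂ) 0)
            + θ (lam : ℂ) ((q : ℤ) + 1) * Φp (lam : ℂ) 0)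
       Δv ^ 2 ≤ 1 →
       4 * (1 - Δv ^ 2) ≤ 4 * (1 - Δv ^ 2) * (1 + Av) ^ 2 + Jv ^ 2) :=
  w_hat_lower_bound_on_spectrum_general q a0 b0 hpa ha0 θ φ hθ hθ0 hθ1 hφ hφ0 hφ1 p u v hsupp hapos
    Θp Φp hΘp hΘpb hΦp hΦpb
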